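/- Let G = SL(3,ℤ). Then for every finite generating set S of G, every nonprincipal ultrafilter ω on ℕ, and every unbounded nondecreasing sequence (d_n) of positive real numbers, the kernel of the natural action of G on the asymptotic cone Cone_ω(G,d_n) is trivial: for every g ≠ 1 in G there exists a sequence (x_n) in G with (‖x_n‖_S/d_n) bounded such that ‖x_n⁻¹ g x_n‖_S/d_n does not converge to 0 along ω. Moreover, every nonidentity element of SL(3,ℤ) has an infinite conjugacy class (FC(SL(3,ℤ)) = 1), and SL(3,ℤ) has no nontrivial finite normal subgroup (K(SL(3,ℤ)) = 1). -/

import Mathlib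

open Filter

/-- The word length of `g` with respect to a generating set `S`. -/
noncomputable def wordLength {G : Type*} [Group G] (S : Set G) (g : G) : ℕ :=
  sInf {n | ∃ l : List G, (∀ x ∈ l, x ∈ S ∨ x⁻¹ ∈ S) ∧ l.length = n ∧ l.prod = g}

abbrev SL3 : Type := Matrix.SpecialLinearGroup (Fin 3) ℤ

/-!
Let `catMap` be the hyperbolic matrix `[[2,1],[1,1]] ⊕ 1`. Conjugation by `catMap` acts on the
first two entries of the bottom row of a matrix by `[[2,1],[1,1]]` and on the first two entries of
its last column by the inverse matrix; both have trace 3 and determinant 1, so each of these four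
entries follows the recurrence `u (k+2) = 3 u (k+1) - u k` along `catMap⁻ᵏ y catMapᵏ`, and a
nonzero solution of this recurrence eventually doubles at every step. Every `g ≠ 1` has a conjugate
`u⁻¹ g u` with one of these entries nonzero, so `(u catMapᵐ)⁻¹ g (u catMapᵐ)` has an entry of
size at least `2ᵐ`. Entries of a product of `w` generators are at most `2^(c w)` (the `ℓ∞` operator
norm is submultiplicative), so this conjugate has word length at least `m / c`, while `u catMapᵐ`
has word length `O(m)`. Taking `m = ⌈d n⌉` shows that `g` moves the base point of the cone.
The same entry growth makes the conjugacy class of `g` infinite, and a finite normal subgroup can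
only contain elements with finite conjugacy class.
-/

section WordLength

variable {G : Type*} [Group G] {S : Set G}

theorem wordLength_le_length {l : List G} (hl : ∀ x ∈ l, x ∈ S ∨ x⁻¹ ∈ S) :
    wordLength S l.prod ≤ l.length :=
  Nat.sInf_le ⟨l, hl, rfl, rfl⟩

theorem exists_list_length_eq_wordLength (hS : Subgroup.closure S = ⊤) (g : G) :
    ∃ l : List G, (∀ x ∈ l, x ∈ S ∨ x⁻¹ ∈ S) ∧ l.length = wordLength S g ∧ l.prod = g := by
  have hg : g ∈ Submonoid.closure (S ∪ S⁻¹) := by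
    rw [← Subgroup.closure_toSubmonoid, hS]
    trivial
  obtain ⟨l, hl, hprod⟩ := Submonoid.exists_list_of_mem_closure hg
  have hne : {n | ∃ m : List G, (∀ x ∈ m, x ∈ S ∨ x⁻¹ ∈ S) ∧ m.length = n ∧ m.prod = g}.Nonempty :=
    ⟨_, l, hl, rfl, hprod⟩
  exact Nat.sInf_mem hne

theorem wordLength_mul_le (hS : Subgroup.closure S = ⊤) (a b : G) :
    wordLength S (a * b) ≤ wordLength S a + wordLength S b := by
  obtain ⟨l, hl, hla, rfl⟩ := exists_list_length_eq_wordLength hS a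
  obtain ⟨m, hm, hmb, rfl⟩ := exists_list_length_eq_wordLength hS b
  rw [← hla, ← hmb, ← List.length_append, ← List.prod_append]
  exact wordLength_le_length fun x hx => (List.mem_append.1 hx).elim (hl x) (hm x)

theorem wordLength_mul_pow_le (hS : Subgroup.closure S = ⊤) (a b : G) (k : ℕ) :
    wordLength S (a * b ^ k) ≤ wordLength S a + k * wordLength S b := by
  induction k with
  | zero => simp
  | succ k ih =>
    calc wordLength S (a * b ^ (k + 1)) ≤ wordLength S (a * b ^ k) + wordLength S b := by
          rw [pow_succ, ← mul_assoc]
          exact wordLength_mul_le hS _ _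
      _ ≤ wordLength S a + (k + 1) * wordLength S b := by rw [add_mul]; omega

theorem le_pow_wordLength (hS : Subgroup.closure S = ⊤) {f : G → ℝ} (hf : ∀ g, 0 ≤ f g)
    (hf_one : f 1 ≤ 1) (hf_mul : ∀ a b, f (a * b) ≤ f a * f b) {C : ℝ}
    (hC : ∀ s, s ∈ S ∨ s⁻¹ ∈ S → f s ≤ C) (g : G) : f g ≤ C ^ wordLength S g := by
  obtain ⟨l, hl, hlen, rfl⟩ := exists_list_length_eq_wordLength hS g
  rw [← hlen]
  clear hlen
  induction l with
  | nil => simpa using hf_one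
  | cons s l ih =>
    have hs := hC s (hl s List.mem_cons_self)
    rw [List.prod_cons, List.length_cons, pow_succ']
    calc f (s * l.prod) ≤ f s * f l.prod := hf_mul _ _
      _ ≤ C * C ^ l.length :=
        mul_le_mul hs (ih fun x hx => hl x (List.mem_cons_of_mem s hx)) (hf _) ((hf s).trans hs)

end WordLength

theorem Subgroup.eq_bot_of_finite_of_normal {G : Type*} [Group G]
    (hG : ∀ g : G, g ≠ 1 → {h : G | ∃ x : G, x⁻¹ * g * x = h}.Infinite)
    {K : Subgroup G} (hK : K.Normal) (hfin : (K : Set G).Finite) : K = ⊥ := by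
  refine (Subgroup.eq_bot_iff_forall K).2 fun g hg => ?_
  by_contra hg1
  refine hG g hg1 (hfin.subset ?_)
  rintro _ ⟨x, rfl⟩
  simpa using hK.conj_mem g hg x⁻¹

section Recurrence

variable {u : ℕ → ℤ}

theorem recurrence_of_linear_step {b : ℕ → ℤ} {p q r s : ℤ}
    (hu : ∀ k, u (k + 1) = p * u k + q * b k) (hb : ∀ k, b (k + 1) = r * u k + s * b k)
    (htr : p + s = 3) (hdet : p * s - q * r = 1) (k : ℕ) :
    u (k + 2) = 3 * u (k + 1) - u k := by
  -- Cayley–Hamilton for `!![p, q; r, s]`.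
  linear_combination hu (k + 1) + q * hb k - s * hu k + u (k + 1) * htr - u k * hdet

theorem two_mul_abs_le_of_abs_le (hu : ∀ k, u (k + 2) = 3 * u (k + 1) - u k) {k : ℕ}
    (hk : |u k| ≤ |u (k + 1)|) : 2 * |u (k + 1)| ≤ |u (k + 2)| := by
  calc 2 * |u (k + 1)| ≤ |3 * u (k + 1)| - |u k| := by
        rw [abs_mul, abs_of_pos (by norm_num : (0 : ℤ) < 3)]
        linarith
    _ ≤ |u (k + 2)| := hu k ▸ abs_sub_abs_le_abs_sub _ _

theorem two_pow_mul_abs_le_of_abs_le (hu : ∀ k, u (k + 2) = 3 * u (k + 1) - u k) {k : ℕ}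
    (hk : |u k| ≤ |u (k + 1)|) (m : ℕ) : 2 ^ m * |u (k + 1)| ≤ |u (k + 1 + m)| := by
  suffices ∀ m, |u (k + m)| ≤ |u (k + m + 1)| ∧ 2 ^ m * |u (k + 1)| ≤ |u (k + m + 1)| by
    simpa only [add_right_comm] using (this m).2
  intro m
  induction m with
  | zero => simpa using hk
  | succ m ih =>
    have h2 := two_mul_abs_le_of_abs_le hu ih.1
    rw [← add_assoc, pow_succ]
    constructor <;> linarith [abs_nonneg (u (k + m + 1))]

theorem ne_zero_or_succ_ne_zero (hu : ∀ k, u (k + 2) = 3 * u (k + 1) - u k) (h0 : u 0 ≠ 0)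
    (k : ℕ) : u k ≠ 0 ∨ u (k + 1) ≠ 0 := by
  induction k with
  | zero => exact Or.inl h0
  | succ k ih =>
    by_contra! h
    have := hu k
    rw [h.1, h.2] at this
    rcases ih with ih | ih <;> omega

theorem exists_two_pow_le_abs (hu : ∀ k, u (k + 2) = 3 * u (k + 1) - u k) (h0 : u 0 ≠ 0) :
    ∃ K, ∀ m, 2 ^ m ≤ |u (K + m)| := by
  set K := Function.argmin fun k => (u k).natAbs
  have hK : |u K| ≤ |u (K + 1)| := by
    simpa only [Int.abs_eq_natAbs, Nat.cast_le] using
      Function.argmin_le (fun k => (u k).natAbs) (K + 1)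
  have hK1 : 1 ≤ |u (K + 1)| := by
    refine Int.one_le_abs fun h1 => ?_
    rw [h1, abs_zero, abs_nonpos_iff] at hK
    exact (ne_zero_or_succ_ne_zero hu h0 K).elim (· hK) (· h1)
  refine ⟨K + 1, fun m => ?_⟩
  calc (2 : ℤ) ^ m ≤ 2 ^ m * |u (K + 1)| := le_mul_of_one_le_right (by positivity) hK1
    _ ≤ |u (K + 1 + m)| := two_pow_mul_abs_le_of_abs_le hu hK m

end Recurrence

open scoped Matrix.Norms.Operator in
theorem Matrix.norm_entry_le_linfty_opNorm {m n α : Type*} [Fintype m] [Fintype n]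
    [SeminormedAddCommGroup α] (A : Matrix m n α) (i : m) (j : n) : ‖A i j‖ ≤ ‖A‖ := by
  rw [Matrix.linfty_opNorm_def]
  have : ‖A i j‖₊ ≤ ∑ k, ‖A i k‖₊ :=
    Finset.single_le_sum (f := fun k => ‖A i k‖₊) (fun _ _ => zero_le) (Finset.mem_univ j)
  exact_mod_cast this.trans (Finset.le_sup (f := fun i => ∑ k, ‖A i k‖₊) (Finset.mem_univ i))

namespace SL3

def catMap : SL3 := ⟨!![2, 1, 0; 1, 1, 0; 0, 0, 1], by decide⟩

def transvection02 : SL3 := ⟨!![1, 0, 1; 0, 1, 0; 0, 0, 1], by decide⟩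

def transvection12 : SL3 := ⟨!![1, 0, 0; 0, 1, 1; 0, 0, 1], by decide⟩

theorem conj_catMap_apply_bottomRow (y : SL3) :
    (catMap⁻¹ * y * catMap) 2 0 = 2 * y 2 0 + y 2 1 ∧
      (catMap⁻¹ * y * catMap) 2 1 = y 2 0 + y 2 1 := by
  simp only [Matrix.SpecialLinearGroup.coe_mul, Matrix.SpecialLinearGroup.coe_inv,
    Matrix.adjugate_fin_three]
  constructor <;>
    simp [catMap, Matrix.mul_apply, Matrix.vecMul, dotProduct, Fin.sum_univ_three, mul_comm]

theorem conj_catMap_apply_lastCol (y : SL3) :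
    (catMap⁻¹ * y * catMap) 0 2 = y 0 2 - y 1 2 ∧
      (catMap⁻¹ * y * catMap) 1 2 = -y 0 2 + 2 * y 1 2 := by
  simp only [Matrix.SpecialLinearGroup.coe_mul, Matrix.SpecialLinearGroup.coe_inv,
    Matrix.adjugate_fin_three]
  constructor <;> simp [catMap, Matrix.mul_apply, Matrix.vecMul, dotProduct, Fin.sum_univ_three,
    mul_comm, sub_eq_add_neg]

theorem conj_transvection02_apply_lastCol (y : SL3) :
    (transvection02⁻¹ * y * transvection02) 0 2 = y 0 0 - y 2 0 + y 0 2 - y 2 2 ∧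
      (transvection02⁻¹ * y * transvection02) 1 2 = y 1 0 + y 1 2 := by
  simp only [Matrix.SpecialLinearGroup.coe_mul, Matrix.SpecialLinearGroup.coe_inv,
    Matrix.adjugate_fin_three]
  constructor <;> simp [transvection02, Matrix.mul_apply, Matrix.vecMul, dotProduct,
    Fin.sum_univ_three, sub_eq_add_neg, add_assoc]

theorem conj_transvection12_apply_lastCol (y : SL3) :
    (transvection12⁻¹ * y * transvection12) 0 2 = y 0 1 + y 0 2 ∧
      (transvection12⁻¹ * y * transvection12) 1 2 = y 1 1 - y 2 1 + y 1 2 - y 2 2 := by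
  simp only [Matrix.SpecialLinearGroup.coe_mul, Matrix.SpecialLinearGroup.coe_inv,
    Matrix.adjugate_fin_three]
  constructor <;> simp [transvection12, Matrix.mul_apply, Matrix.vecMul, dotProduct,
    Fin.sum_univ_three, sub_eq_add_neg, add_assoc]

theorem conj_entry_recurrence {D : ℕ → SL3} (hD : ∀ k, D (k + 1) = catMap⁻¹ * D k * catMap)
    {i j : Fin 3} (hij : i = 2 ↔ j ≠ 2) (k : ℕ) :
    D (k + 2) i j = 3 * D (k + 1) i j - D k i j := by
  have hrow := fun k => conj_catMap_apply_bottomRow (D k)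
  have hcol := fun k => conj_catMap_apply_lastCol (D k)
  simp only [← hD] at hrow hcol
  have hcases : (i = 2 ∧ j = 0) ∨ (i = 2 ∧ j = 1) ∨ (i = 0 ∧ j = 2) ∨ (i = 1 ∧ j = 2) := by
    revert i j
    decide
  rcases hcases with ⟨rfl, rfl⟩ | ⟨rfl, rfl⟩ | ⟨rfl, rfl⟩ | ⟨rfl, rfl⟩
  · exact recurrence_of_linear_step (u := fun k => D k 2 0) (b := fun k => D k 2 1)
      (p := 2) (q := 1) (r := 1) (s := 1) (fun k => by rw [(hrow k).1]; ring)
      (fun k => by rw [(hrow k).2]; ring) (by norm_num) (by norm_num) k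
  · exact recurrence_of_linear_step (u := fun k => D k 2 1) (b := fun k => D k 2 0)
      (p := 1) (q := 1) (r := 1) (s := 2) (fun k => by rw [(hrow k).2]; ring)
      (fun k => by rw [(hrow k).1]; ring) (by norm_num) (by norm_num) k
  · exact recurrence_of_linear_step (u := fun k => D k 0 2) (b := fun k => D k 1 2)
      (p := 1) (q := -1) (r := -1) (s := 2) (fun k => by rw [(hcol k).1]; ring)
      (fun k => by rw [(hcol k).2]; ring) (by norm_num) (by norm_num) k
  · exact recurrence_of_linear_step (u := fun k => D k 1 2) (b := fun k => D k 0 2)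
      (p := 2) (q := -1) (r := -1) (s := 1) (fun k => by rw [(hcol k).2]; ring)
      (fun k => by rw [(hcol k).1]; ring) (by norm_num) (by norm_num) k

theorem exists_conj_offBlock_ne_zero {g : SL3} (hg : g ≠ 1) :
    ∃ u : SL3, ∃ i j : Fin 3, (i = 2 ↔ j ≠ 2) ∧ (u⁻¹ * g * u) i j ≠ 0 := by
  by_contra! h
  -- Then `g` and its conjugates by the two transvections are block diagonal, which forces
  -- `g = diag(t, t, t)` with `t ^ 3 = 1`.
  have hg0 : ∀ i j : Fin 3, (i = 2 ↔ j ≠ 2) → g i j = 0 := fun i j hij => by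
    simpa using h 1 i j hij
  obtain ⟨h02', h12'⟩ := conj_transvection02_apply_lastCol g
  obtain ⟨h02'', h12''⟩ := conj_transvection12_apply_lastCol g
  rw [h _ 0 2 (by decide)] at h02' h02''
  rw [h _ 1 2 (by decide)] at h12' h12''
  have h20 := hg0 2 0 (by decide)
  have h21 := hg0 2 1 (by decide)
  have h02 := hg0 0 2 (by decide)
  have h12 := hg0 1 2 (by decide)
  have h00 : g 0 0 = g 2 2 := by linarith
  have h11 : g 1 1 = g 2 2 := by linarith
  have h10 : g 1 0 = 0 := by linarith
  have h01 : g 0 1 = 0 := by linarith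
  have hdet := g.2
  rw [Matrix.det_fin_three] at hdet
  simp only [h00, h11, h10, h01, h20, h21, h02, h12] at hdet
  have h22 : g 2 2 = 1 := by nlinarith [sq_nonneg (g 2 2 - 1), sq_nonneg (g 2 2 + 1)]
  apply hg
  ext i j
  fin_cases i <;> fin_cases j <;> simp [h00, h11, h10, h01, h20, h21, h02, h12, h22]

theorem exists_conj_entry_growth {g : SL3} (hg : g ≠ 1) :
    ∃ u : SL3, ∃ i j : Fin 3,
      ∀ m : ℕ, 2 ^ m ≤ |((u * catMap ^ m)⁻¹ * g * (u * catMap ^ m)) i j| := by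
  obtain ⟨u, i, j, hij, hne⟩ := exists_conj_offBlock_ne_zero hg
  set D : ℕ → SL3 := fun k => (u * catMap ^ k)⁻¹ * g * (u * catMap ^ k)
  have hD : ∀ k, D (k + 1) = catMap⁻¹ * D k * catMap := fun k => by
    simp only [D, pow_succ, mul_inv_rev, mul_assoc]
  obtain ⟨K, hK⟩ := exists_two_pow_le_abs (u := fun k => D k i j)
    (conj_entry_recurrence hD hij) (by simpa [D] using hne)
  exact ⟨u * catMap ^ K, i, j, fun m => by simpa [D, mul_assoc, pow_add] using hK m⟩

theorem infinite_conjugates {g : SL3} (hg : g ≠ 1) :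
    {h : SL3 | ∃ x : SL3, x⁻¹ * g * x = h}.Infinite := by
  obtain ⟨u, i, j, hgrow⟩ := exists_conj_entry_growth hg
  refine Set.Infinite.of_image (fun h : SL3 => |h i j|) (Set.infinite_of_not_bddAbove ?_)
  rintro ⟨B, hB⟩
  obtain ⟨m, hm⟩ := pow_unbounded_of_one_lt B one_lt_two
  exact hm.not_ge ((hgrow m).trans (hB ⟨_, ⟨u * catMap ^ m, rfl⟩, rfl⟩))

open scoped Matrix.Norms.Operator in
theorem exists_abs_apply_le_two_pow_wordLength {S : Set SL3} (hS : S.Finite)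
    (hgen : Subgroup.closure S = ⊤) :
    ∃ c : ℕ, ∀ (g : SL3) (i j : Fin 3), |g i j| ≤ 2 ^ (c * wordLength S g) := by
  obtain ⟨C, hC⟩ :=
    ((hS.union hS.inv).image fun s : SL3 => ‖(s : Matrix (Fin 3) (Fin 3) ℤ)‖).bddAbove
  obtain ⟨c, hc⟩ := pow_unbounded_of_one_lt C (one_lt_two : (1 : ℝ) < 2)
  refine ⟨c, fun g i j => ?_⟩
  have hnorm : ‖(g : Matrix (Fin 3) (Fin 3) ℤ)‖ ≤ (2 ^ c) ^ wordLength S g :=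
    le_pow_wordLength hgen (fun _ => norm_nonneg _) (by simp)
      (fun a b => by simpa using norm_mul_le (a : Matrix (Fin 3) (Fin 3) ℤ) b)
      (fun s hs => (hC ⟨s, hs, rfl⟩).trans hc.le) g
  have := (Matrix.norm_entry_le_linfty_opNorm _ i j).trans hnorm
  rw [Int.norm_eq_abs, ← pow_mul] at this
  exact_mod_cast this

theorem exists_le_mul_wordLength_conj {S : Set SL3} (hS : S.Finite)
    (hgen : Subgroup.closure S = ⊤) {g : SL3} (hg : g ≠ 1) :
    ∃ u : SL3, ∃ c : ℕ,
      ∀ m : ℕ, m ≤ c * wordLength S ((u * catMap ^ m)⁻¹ * g * (u * catMap ^ m)) := by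
  obtain ⟨u, i, j, hgrow⟩ := exists_conj_entry_growth hg
  obtain ⟨c, hc⟩ := exists_abs_apply_le_two_pow_wordLength hS hgen
  exact ⟨u, c, fun m => (pow_le_pow_iff_right₀ (one_lt_two : (1 : ℤ) < 2)).1
    ((hgrow m).trans (hc _ i j))⟩

theorem exists_not_tendsto_wordLength_conj_div {S : Set SL3} (hS : S.Finite)
    (hgen : Subgroup.closure S = ⊤) (l : Filter ℕ) [l.NeBot] {d : ℕ → ℝ} (hd0 : 0 < d 0)
    (hd : Monotone d) {g : SL3} (hg : g ≠ 1) :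
    ∃ x : ℕ → SL3, (∃ B : ℝ, ∀ n, (wordLength S (x n) : ℝ) / d n ≤ B) ∧
      ¬ Tendsto (fun n => (wordLength S ((x n)⁻¹ * g * x n) : ℝ) / d n) l (nhds 0) := by
  obtain ⟨u, c, hc⟩ := exists_le_mul_wordLength_conj hS hgen hg
  have hpos : ∀ n, 0 < d n := fun n => hd0.trans_le (hd (Nat.zero_le n))
  have hb : (0 : ℝ) ≤ wordLength S catMap := Nat.cast_nonneg _
  refine ⟨fun n => u * catMap ^ ⌈d n⌉₊,
    ⟨(wordLength S u + wordLength S catMap) / d 0 + wordLength S catMap, fun n => ?_⟩,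
    fun hlim => ?_⟩
  · have hx : (wordLength S (u * catMap ^ ⌈d n⌉₊) : ℝ) ≤
        wordLength S u + ⌈d n⌉₊ * wordLength S catMap := by
      exact_mod_cast wordLength_mul_pow_le hgen u catMap _
    have hceil : (⌈d n⌉₊ : ℝ) < d n + 1 := Nat.ceil_lt_add_one (hpos n).le
    have hab : (wordLength S u + wordLength S catMap : ℝ) ≤
        (wordLength S u + wordLength S catMap) / d 0 * d n := by
      rw [div_mul_eq_mul_div, le_div_iff₀ hd0]
      exact mul_le_mul_of_nonneg_left (hd (Nat.zero_le n)) (by positivity)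
    rw [div_le_iff₀ (hpos n)]
    nlinarith
  · have hc0 : (0 : ℝ) < c := by
      have : c ≠ 0 := by rintro rfl; simpa using hc 1
      positivity
    have hlow : ∀ n, (c : ℝ)⁻¹ ≤ wordLength S ((u * catMap ^ ⌈d n⌉₊)⁻¹ * g *
        (u * catMap ^ ⌈d n⌉₊)) / d n := fun n => by
      rw [le_div_iff₀ (hpos n), inv_mul_le_iff₀ hc0]
      exact (Nat.le_ceil _).trans (by exact_mod_cast hc ⌈d n⌉₊)
    obtain ⟨n, hn⟩ := (hlim.eventually_lt_const (inv_pos.2 hc0)).exists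
    exact (hn.trans_le (hlow n)).false

end SL3

/-- For `G = SL(3,ℤ)`: the kernel of the natural action of `G` on every asymptotic cone is
trivial, every nonidentity element has an infinite conjugacy class (`FC(G) = 1`), and `G`
has no nontrivial finite normal subgroup (`K(G) = 1`). -/
theorem coneKernel_FC_K_trivial_SL3 :
    (∀ S : Set SL3, S.Finite → Subgroup.closure S = ⊤ →
      ∀ (ω : Ultrafilter ℕ), (∀ A ∈ ω, A.Infinite) →
        ∀ d : ℕ → ℝ, (∀ n, 0 < d n) → Monotone d → (∀ B : ℝ, ∃ n, B < d n) →
          ∀ g : SL3, g ≠ 1 →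
            ∃ x : ℕ → SL3,
              (∃ B : ℝ, ∀ n, (wordLength S (x n) : ℝ) / d n ≤ B) ∧
              ¬ Tendsto (fun n => (wordLength S ((x n)⁻¹ * g * x n) : ℝ) / d n)
                  (ω : Filter ℕ) (nhds 0)) ∧
    (∀ g : SL3, g ≠ 1 → Set.Infinite {h : SL3 | ∃ x : SL3, x⁻¹ * g * x = h}) ∧
    (∀ K : Subgroup SL3, K.Normal → (K : Set SL3).Finite → K = ⊥) :=
  ⟨fun _ hS hgen ω _ _ hd hmono _ _ hg =>
      SL3.exists_not_tendsto_wordLength_conj_div hS hgen ω (hd 0) hmono hg,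
    fun _ hg => SL3.infinite_conjugates hg,
    fun _ hK hfin =>
      Subgroup.eq_bot_of_finite_of_normal (fun _ hg => SL3.infinite_conjugates hg) hK hfin⟩
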